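/- Let Γ be a vertex-transitive graph and let G ≤ Aut(Γ), v ∈ V(Γ), and O_v be as in the construction. Then the graph T(Γ,G;O_v) is isomorphic to a generalized truncation T(Γ,ρ;Υ) of the graph Γ by a graph Υ isomorphic to the orbital graph (Γ(v),O_v), for a suitable vertex-neighborhood labeling ρ of Γ. -/

import Mathlib

open SimpleGraph

variable {V : Type*}

/-- A permutation of the vertices is an automorphism of the graph. -/
def IsAut (Γ : SimpleGraph V) (π : Equiv.Perm V) : Prop :=
  ∀ a b : V, Γ.Adj (π a) (π b) ↔ Γ.Adj a b

/-- The generalized truncation `T(Γ,G;O_v)`: its vertices are the darts `(u,w)` of `Γ`;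
`(u,w)` is adjacent to `(w,u)` (blue edges), and `(u,w)` is adjacent to `(u,w')` whenever
there is a `g ∈ G` with `u^g = v` and `{w^g, w'^g} ∈ O` (red edges). -/
def truncT (Γ : SimpleGraph V) (G : Set (Equiv.Perm V)) (v : V) (O : Set (Sym2 V)) :
    SimpleGraph {p : V × V // Γ.Adj p.1 p.2} :=
  SimpleGraph.fromRel (fun x y =>
    (y.1.1 = x.1.2 ∧ y.1.2 = x.1.1) ∨
    (x.1.1 = y.1.1 ∧ ∃ g ∈ G, g x.1.1 = v ∧ s(g x.1.2, g y.1.2) ∈ O))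

/-- The orbital graph `(Γ(v), O)`: vertex set is the neighborhood of `v`, edge set `O`. -/
def orbitalGraph (Γ : SimpleGraph V) (v : V) (O : Set (Sym2 V)) :
    SimpleGraph (Γ.neighborSet v) :=
  SimpleGraph.fromRel (fun a b => s((a : V), (b : V)) ∈ O)

/-- The lift of an automorphism `g` of `Γ` to a permutation of the darts of `Γ`,
`(u,w) ↦ (u^g, w^g)`. -/
def liftPerm (Γ : SimpleGraph V) (g : Equiv.Perm V) (hg : IsAut Γ g) :
    Equiv.Perm {p : V × V // Γ.Adj p.1 p.2} :=
  Equiv.Perm.subtypePerm (Equiv.prodCongr g g) (fun x => hg x.1 x.2)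

/-- The generalized truncation `T(Γ,ρ;Υ)` of a graph `Γ` by a graph `Υ`,
with respect to a labeling `ρ` of the darts of `Γ` by vertices of `Υ`. -/
def trunc {V W : Type*} (Γ : SimpleGraph V) (Υ : SimpleGraph W)
    (ρ : ∀ u w : V, Γ.Adj u w → W) : SimpleGraph (V × W) where
  Adj x y := (x.1 = y.1 ∧ Υ.Adj x.2 y.2) ∨
    (∃ h : Γ.Adj x.1 y.1, x.2 = ρ x.1 y.1 h ∧ y.2 = ρ y.1 x.1 h.symm)
  symm := by
    constructor
    rintro ⟨u, i⟩ ⟨w, j⟩ (⟨h1, h2⟩ | ⟨h, h1, h2⟩)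
    · exact Or.inl ⟨h1.symm, h2.symm⟩
    · exact Or.inr ⟨h.symm, h2, h1⟩
  loopless := by
    constructor
    rintro ⟨u, i⟩ (⟨_, h⟩ | ⟨h, _⟩)
    · exact Υ.loopless.irrefl _ h
    · exact Γ.loopless.irrefl _ h

/-- `ρ` is a vertex-neighborhood labeling of `Γ`: for every vertex `u`, the restriction
of `ρ` to the darts emanating from `u` is a bijection onto the vertex set of `Υ`. -/
def IsVNLabeling {V W : Type*} (Γ : SimpleGraph V) (ρ : ∀ u w : V, Γ.Adj u w → W) : Prop :=
  ∀ u : V, ∀ i : W, ∃! w : V, ∃ h : Γ.Adj u w, ρ u w h = i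


/-
Choose for every vertex `u` an element `σ u ∈ G` with `u^{σ u} = v`. The dart `(u,w)` is then
sent to `(u, w^{σ u})`, a bijection from the darts of `Γ` onto `V(Γ) × Γ(v)` whose second
coordinate is a vertex-neighborhood labeling. Blue edges become the edges between `(u, ρ(u,w))`
and `(w, ρ(w,u))`. A red edge at `u` is witnessed by some `g ∈ G` with `u^g = v`; as `O` is
invariant under `G_v ∋ g⁻¹ σ u`, it may be witnessed by `σ u` instead, so red edges become
edges of the orbital graph.
-/

lemma IsAut.adj_iff_of_apply_eq {Γ : SimpleGraph V} {π : Equiv.Perm V} (hπ : IsAut Γ π)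
    {u v : V} (hu : π u = v) (w : V) : Γ.Adj v (π w) ↔ Γ.Adj u w :=
  hu ▸ hπ u w

lemma orbitalGraph_adj_iff {Γ : SimpleGraph V} {v : V} {O : Set (Sym2 V)}
    {a b : Γ.neighborSet v} :
    (orbitalGraph Γ v O).Adj a b ↔ a ≠ b ∧ s((a : V), b) ∈ O := by
  rw [orbitalGraph, fromRel_adj, Sym2.eq_swap, or_self]

section DartLabel

variable {Γ : SimpleGraph V} {v : V} {σ : V → Equiv.Perm V}

def dartEquiv (hσ : ∀ u, IsAut Γ (σ u)) (hσv : ∀ u, σ u u = v) :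
    {p : V × V // Γ.Adj p.1 p.2} ≃ V × Γ.neighborSet v :=
  (Equiv.subtypeProdEquivSigmaSubtype fun u w => Γ.Adj u w).trans <|
    (Equiv.sigmaCongrRight fun u =>
      (σ u).subtypeEquiv fun w => ((hσ u).adj_iff_of_apply_eq (hσv u) w).symm).trans
    (Equiv.sigmaEquivProd _ _)

def dartLabel (hσ : ∀ u, IsAut Γ (σ u)) (hσv : ∀ u, σ u u = v) (u w : V) (h : Γ.Adj u w) :
    Γ.neighborSet v :=
  (dartEquiv hσ hσv ⟨(u, w), h⟩).2

variable (hσ : ∀ u, IsAut Γ (σ u)) (hσv : ∀ u, σ u u = v)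

@[simp]
lemma coe_dartLabel (u w : V) (h : Γ.Adj u w) : (dartLabel hσ hσv u w h : V) = σ u w :=
  rfl

lemma dartLabel_inj {u w w' : V} {h : Γ.Adj u w} {h' : Γ.Adj u w'} :
    dartLabel hσ hσv u w h = dartLabel hσ hσv u w' h' ↔ w = w' := by
  rw [Subtype.ext_iff, coe_dartLabel, coe_dartLabel, (σ u).injective.eq_iff]

lemma isVNLabeling_dartLabel : IsVNLabeling Γ (dartLabel hσ hσv) := by
  intro u i
  refine ⟨(σ u).symm i, ⟨?_, Subtype.ext ((σ u).apply_symm_apply i)⟩, ?_⟩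
  · rw [← (hσ u).adj_iff_of_apply_eq (hσv u), Equiv.apply_symm_apply]
    exact i.2
  · rintro w ⟨h, rfl⟩
    exact ((σ u).symm_apply_apply w).symm

lemma trunc_adj_dartEquiv_iff (Υ : SimpleGraph (Γ.neighborSet v))
    (x y : {p : V × V // Γ.Adj p.1 p.2}) :
    (trunc Γ Υ (dartLabel hσ hσv)).Adj (dartEquiv hσ hσv x) (dartEquiv hσ hσv y) ↔
      (x.1.1 = y.1.1 ∧ Υ.Adj (dartLabel hσ hσv _ _ x.2) (dartLabel hσ hσv _ _ y.2)) ∨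
        (x.1.2 = y.1.1 ∧ y.1.2 = x.1.1) := by
  rcases x with ⟨⟨u, w⟩, hx⟩
  rcases y with ⟨⟨u', w'⟩, hy⟩
  refine or_congr_right ⟨fun ⟨_, h₁, h₂⟩ => ?_, fun ⟨h₁, h₂⟩ => ?_⟩
  · exact ⟨(dartLabel_inj hσ hσv).1 h₁, (dartLabel_inj hσ hσv).1 h₂⟩
  · exact ⟨h₁ ▸ hx, (dartLabel_inj hσ hσv).2 h₁, (dartLabel_inj hσ hσv).2 h₂⟩

lemma orbitalGraph_adj_dartLabel_iff {O : Set (Sym2 V)} {u w w' : V} {h : Γ.Adj u w}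
    {h' : Γ.Adj u w'} :
    (orbitalGraph Γ v O).Adj (dartLabel hσ hσv u w h) (dartLabel hσ hσv u w' h') ↔
      w ≠ w' ∧ s(σ u w, σ u w') ∈ O := by
  rw [orbitalGraph_adj_iff, ne_eq, dartLabel_inj, coe_dartLabel, coe_dartLabel]

end DartLabel

section TruncT

variable {Γ : SimpleGraph V} {G : Subgroup (Equiv.Perm V)} {v : V} {O : Set (Sym2 V)}
  {σ : V → Equiv.Perm V}

lemma mk_apply_mem_of_mk_apply_mem (hOinv : ∀ p ∈ O, ∀ g ∈ G, g v = v → p.map ⇑g ∈ O)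
    {g h : Equiv.Perm V} (hg : g ∈ G) (hh : h ∈ G) {u : V} (hgu : g u = v) (hhu : h u = v)
    {a b : V} (hab : s(g a, g b) ∈ O) : s(h a, h b) ∈ O := by
  have hfix : (h * g⁻¹) v = v := by
    rw [Equiv.Perm.mul_apply, Equiv.Perm.inv_eq_iff_eq.mpr hgu.symm, hhu]
  simpa [Sym2.map_mk] using hOinv _ hab _ (mul_mem hh (inv_mem hg)) hfix

lemma exists_apply_eq_mk_apply_mem_iff
    (hOinv : ∀ p ∈ O, ∀ g ∈ G, g v = v → p.map ⇑g ∈ O) (hσG : ∀ u, σ u ∈ G)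
    (hσv : ∀ u, σ u u = v) {u a b : V} :
    (∃ g ∈ G, g u = v ∧ s(g a, g b) ∈ O) ↔ s(σ u a, σ u b) ∈ O :=
  ⟨fun ⟨_, hg, hgu, hab⟩ => mk_apply_mem_of_mk_apply_mem hOinv hg (hσG u) hgu (hσv u) hab,
    fun h => ⟨σ u, hσG u, hσv u, h⟩⟩

lemma truncT_adj_iff (hOinv : ∀ p ∈ O, ∀ g ∈ G, g v = v → p.map ⇑g ∈ O)
    (hσG : ∀ u, σ u ∈ G) (hσv : ∀ u, σ u u = v) (x y : {p : V × V // Γ.Adj p.1 p.2}) :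
    (truncT Γ G v O).Adj x y ↔
      (x.1.1 = y.1.1 ∧ x.1.2 ≠ y.1.2 ∧ s(σ x.1.1 x.1.2, σ x.1.1 y.1.2) ∈ O) ∨
        (x.1.2 = y.1.1 ∧ y.1.2 = x.1.1) := by
  rcases x with ⟨⟨u, w⟩, hx⟩
  rcases y with ⟨⟨u', w'⟩, hy⟩
  rw [truncT, fromRel_adj]
  simp only [SetLike.mem_coe, exists_apply_eq_mk_apply_mem_iff hOinv hσG hσv, ne_eq,
    Subtype.mk.injEq, Prod.mk.injEq]
  -- blue edges join distinct darts as `Γ` is loopless, and the red relation is symmetric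
  grind [hx.ne, hy.ne, Sym2.eq_swap]

end TruncT

theorem stmt9_general {V : Type*}
    (Γ : SimpleGraph V) (G : Subgroup (Equiv.Perm V)) (v : V) (O : Set (Sym2 V))
    (hGaut : ∀ g ∈ G, IsAut Γ g)
    (hGtrans : ∀ a b : V, ∃ g ∈ G, g a = b)
    (hOinv : ∀ p ∈ O, ∀ g ∈ G, g v = v → p.map ⇑g ∈ O) :
    ∃ ρ : (∀ u w : V, Γ.Adj u w → Γ.neighborSet v), IsVNLabeling Γ ρ ∧
      Nonempty (truncT Γ (↑G) v O ≃g trunc Γ (orbitalGraph Γ v O) ρ) := by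
  choose σ hσG hσv using fun u => hGtrans u v
  have hσ : ∀ u, IsAut Γ (σ u) := fun u => hGaut _ (hσG u)
  refine ⟨dartLabel hσ hσv, isVNLabeling_dartLabel hσ hσv, ⟨dartEquiv hσ hσv, ?_⟩⟩
  intro x y
  rw [trunc_adj_dartEquiv_iff, truncT_adj_iff hOinv hσG hσv]
  rcases x with ⟨⟨u, w⟩, _⟩
  rcases y with ⟨⟨u', w'⟩, _⟩
  refine or_congr_left (and_congr_right ?_)
  rintro rfl
  exact orbitalGraph_adj_dartLabel_iff hσ hσv

/-- If `Γ` is vertex-transitive, with `G`, `v` and `O_v` as in the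
construction, then `T(Γ,G;O_v)` is isomorphic to a generalized truncation of `Γ` by the
orbital graph `(Γ(v), O_v)`, for a suitable vertex-neighborhood labeling of `Γ`. -/
theorem stmt9 {V : Type*} [Fintype V] [DecidableEq V]
    (Γ : SimpleGraph V) (G : Subgroup (Equiv.Perm V)) (v : V) (O : Set (Sym2 V))
    (hGaut : ∀ g ∈ G, IsAut Γ g)
    (hGtrans : ∀ a b : V, ∃ g ∈ G, g a = b)
    (hOsub : ∀ p ∈ O, ¬ p.IsDiag ∧ ∀ w ∈ p, Γ.Adj v w)
    (hOinv : ∀ p ∈ O, ∀ g ∈ G, g v = v → p.map ⇑g ∈ O) :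
    ∃ ρ : (∀ u w : V, Γ.Adj u w → Γ.neighborSet v), IsVNLabeling Γ ρ ∧
      Nonempty (truncT Γ (↑G) v O ≃g trunc Γ (orbitalGraph Γ v O) ρ) :=
  stmt9_general Γ G v O hGaut hGtrans hOinv
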